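/- arXiv:2206.03621 — 4 statements merged into one kernel-verified Lean document; each statement's English description precedes it below -/
import Mathlib

section
/- If R is a normal domain, S is a domain, R → S is an injective module-finite ring homomorphism, and the rank of S as an R-module is invertible in R, then there exists an R-linear map σ : S → R with σ(1) = 1 (i.e., the inclusion R → S splits as a map of R-modules). -/
set_option maxHeartbeats 800000
set_option synthInstance.maxHeartbeats 80000

open TensorProduct nonZeroDivisors

attribute [local instance] Algebra.TensorProduct.rightAlgebra

/-- If `R` is a normal (integrally closed) domain, `S` a domain, `R → S` an injective
module-finite ring map, and the rank of `S` as an `R`-module (i.e. the dimension of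
`Frac(R) ⊗_R S` over `Frac(R)`) is invertible in `R`, then the inclusion `R → S`
splits as a map of `R`-modules: there is an `R`-linear `σ : S → R` with `σ 1 = 1`. -/
theorem trace_splitting_of_normal
    (R S : Type*) [CommRing R] [IsDomain R] [IsIntegrallyClosed R]
    [CommRing S] [IsDomain S] [Algebra R S] [Module.Finite R S]
    (hinj : Function.Injective (algebraMap R S))
    (hrank : IsUnit ((Module.finrank (FractionRing R)
      (TensorProduct R (FractionRing R) S) : R))) :
    ∃ σ : S →ₗ[R] R, σ 1 = 1 := by
  classical
  set K := FractionRing R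
  set F := K ⊗[R] S with hF
  -- tower R S F
  haveI : IsScalarTower R S F := IsScalarTower.of_algebraMap_eq fun r => by
    exact (Algebra.TensorProduct.includeRight.commutes r).symm
  -- F is a localization of S at the image of R⁰
  haveI hloc : IsLocalizedModule R⁰ (IsScalarTower.toAlgHom R S F).toLinearMap := by
    rw [isLocalizedModule_iff_isBaseChange (S := R⁰) (A := K)]
    have heq : (IsScalarTower.toAlgHom R S F).toLinearMap = TensorProduct.mk R K S 1 := by
      ext x; rfl
    rw [heq]
    exact TensorProduct.isBaseChange R S K
  haveI : IsLocalization (Algebra.algebraMapSubmonoid S R⁰) F :=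
    isLocalizedModule_iff_isLocalization.mp hloc
  haveI : IsDomain F := by
    refine IsLocalization.isDomain_of_le_nonZeroDivisors (R := S) (S := F)
      (M := Algebra.algebraMapSubmonoid S R⁰) ?_
    rintro _ ⟨r, hr, rfl⟩
    exact mem_nonZeroDivisors_of_ne_zero fun h =>
      nonZeroDivisors.ne_zero hr (hinj (h.trans (map_zero _).symm))
  haveI : Module.Finite K F := Module.Finite.base_change R K S
  haveI : FiniteDimensional K F := inferInstance
  -- the trace map, restricted to S, lands in the integral closure of R in K, i.e. in R
  have hint : ∀ x : S, IsIntegral R (Algebra.trace K F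
      (Algebra.TensorProduct.includeRight x)) := fun x => by
    letI : Field F := fieldOfFiniteDimensional K F
    have hx : IsIntegral R x := Algebra.IsIntegral.isIntegral x
    exact Algebra.isIntegral_trace (hx.map (Algebra.TensorProduct.includeRight (A := K)))
  let τ : S →ₗ[R] K :=
    ((Algebra.trace K F).restrictScalars R).comp
      (Algebra.TensorProduct.includeRight (A := K) (B := S)).toLinearMap
  let τ' : S →ₗ[R] Subalgebra.toSubmodule (integralClosure R K) :=
    τ.codRestrict _ fun x => hint x
  let σ₀ : S →ₗ[R] R :=
    (IsIntegralClosure.equiv R (integralClosure R K) K R).toLinearMap.comp τ'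
  have hσ₀ : ∀ x : S, algebraMap R K (σ₀ x) =
      Algebra.trace K F (Algebra.TensorProduct.includeRight x) := fun x =>
    IsIntegralClosure.algebraMap_equiv R (integralClosure R K) K R _
  set n : R := (Module.finrank K F : R) with hn
  have hσ₀1 : σ₀ 1 = n := by
    apply IsFractionRing.injective R K
    rw [hσ₀, map_one]
    have : (1 : F) = algebraMap K F 1 := (map_one _).symm
    rw [this, Algebra.trace_algebraMap, hn, map_natCast, nsmul_eq_mul, mul_one]
  refine ⟨((hrank.unit⁻¹ : Rˣ) : R) • σ₀, ?_⟩
  rw [LinearMap.smul_apply, hσ₀1, smul_eq_mul]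
  exact hrank.unit.inv_mul
end

section
/- If R is a module-finite subring of a unique factorization domain S (both Noetherian normal domains), then the divisor class group Cl(R) is a torsion abelian group. -/
section DivisorClassGroup

variable (R : Type) [CommRing R]

/-- An ideal of `R` is a height-one prime if it is prime, nonzero, and every prime strictly
below it is zero. -/
def HeightOnePrime (P : Ideal R) : Prop :=
  P.IsPrime ∧ P ≠ ⊥ ∧ ∀ Q : Ideal R, Q.IsPrime → Q < P → Q = ⊥

/-- The divisor group of `R`: the free abelian group on the height-one primes of `R`. -/
abbrev Divisor : Type := {P : Ideal R // HeightOnePrime R P} →₀ ℤ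

/-- The order of vanishing of `r` along the prime `P`: the largest `n` with
`r ∈ Pⁿ R_P` (for a Krull domain `R` and nonzero `r` this is the valuation of `r` at `P`). -/
noncomputable def ordAt (P : Ideal R) (hP : P.IsPrime) (r : R) : ℕ :=
  letI : P.IsPrime := hP
  sSup {n : ℕ | algebraMap R (Localization.AtPrime P) r ∈
    (Ideal.map (algebraMap R (Localization.AtPrime P)) P) ^ n}

/-- The subgroup of principal divisors: generated by the divisors of nonzero elements of
the fraction field, `div(a/b) = ∑_P (ord_P(a) − ord_P(b))·[P]`. -/
noncomputable def principalDivisors : AddSubgroup (Divisor R) :=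
  AddSubgroup.closure {d : Divisor R | ∃ a b : R, a ≠ 0 ∧ b ≠ 0 ∧
    ∀ P : {P : Ideal R // HeightOnePrime R P},
      d P = (ordAt R P.1 P.2.1 a : ℤ) - (ordAt R P.1 P.2.1 b : ℤ)}

/-- The divisor class group of `R`: divisors modulo principal divisors. -/
noncomputable def DivClassGroup : Type := Divisor R ⧸ principalDivisors R

noncomputable instance : AddCommGroup (DivClassGroup R) :=
  QuotientAddGroup.Quotient.addCommGroup (principalDivisors R)

end DivisorClassGroup

open scoped nonZeroDivisors


lemma ordAt_eq_zero_of_not_mem (R : Type) [CommRing R] (P : Ideal R) (hP : P.IsPrime) {a : R} (ha : a ∉ P) :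
    ordAt R P hP a = 0 := by
  haveI := hP
  have hset : {n : ℕ | algebraMap R (Localization.AtPrime P) a ∈
      (Ideal.map (algebraMap R (Localization.AtPrime P)) P) ^ n} = {0} := by
    ext n
    simp only [Set.mem_setOf_eq, Set.mem_singleton_iff]
    constructor
    · intro hn
      by_contra h0
      have h1 : (Ideal.map (algebraMap R (Localization.AtPrime P)) P) ^ n ≤
          (Ideal.map (algebraMap R (Localization.AtPrime P)) P) ^ 1 :=
        Ideal.pow_le_pow_right (Nat.one_le_iff_ne_zero.mpr h0)
      rw [pow_one] at h1
      have h2 := h1 hn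
      rw [Localization.AtPrime.map_eq_maximalIdeal] at h2
      exact ha ((IsLocalization.AtPrime.to_map_mem_maximal_iff _ P a).mp h2)
    · rintro rfl
      simp [Ideal.one_eq_top]
  show sSup _ = 0
  rw [hset, csSup_singleton]

lemma one_le_ordAt (R : Type) [CommRing R] [IsDomain R] [IsNoetherianRing R] (P : Ideal R) (hP : P.IsPrime)
    {a : R} (ha0 : a ≠ 0) (ha : a ∈ P) : 0 < ordAt R P hP a := by
  haveI := hP
  haveI : IsDomain (Localization.AtPrime P) :=
    IsLocalization.isDomain_localization P.primeCompl_le_nonZeroDivisors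
  haveI : IsNoetherianRing (Localization.AtPrime P) :=
    IsLocalization.isNoetherianRing P.primeCompl _ inferInstance
  have hK : (⨅ n : ℕ, (IsLocalRing.maximalIdeal (Localization.AtPrime P)) ^ n) = ⊥ :=
    Ideal.iInf_pow_eq_bot_of_isLocalRing _
      (IsLocalRing.maximalIdeal.isMaximal (Localization.AtPrime P)).ne_top
  have hane : algebraMap R (Localization.AtPrime P) a ≠ 0 := fun h =>
    ha0 (by
      have := IsLocalization.injective (Localization.AtPrime P)
        P.primeCompl_le_nonZeroDivisors
      exact this (by simpa using h))
  have hbdd : ∃ k, algebraMap R (Localization.AtPrime P) a ∉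
      (Ideal.map (algebraMap R (Localization.AtPrime P)) P) ^ k := by
    by_contra hall
    push_neg at hall
    apply hane
    rw [← Submodule.mem_bot (R := Localization.AtPrime P), ← hK, Submodule.mem_iInf]
    intro n
    rw [← Localization.AtPrime.map_eq_maximalIdeal]
    exact hall n
  obtain ⟨k, hk⟩ := hbdd
  have hbdd2 : BddAbove {n : ℕ | algebraMap R (Localization.AtPrime P) a ∈
      (Ideal.map (algebraMap R (Localization.AtPrime P)) P) ^ n} := by
    refine ⟨k, fun j hj => ?_⟩
    by_contra hjk
    push_neg at hjk
    exact hk ((Ideal.pow_le_pow_right hjk.le) hj)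
  have h1 : 1 ∈ {n : ℕ | algebraMap R (Localization.AtPrime P) a ∈
      (Ideal.map (algebraMap R (Localization.AtPrime P)) P) ^ n} := by
    simpa [pow_one] using Ideal.mem_map_of_mem (algebraMap R (Localization.AtPrime P)) ha
  have h2 := le_csSup hbdd2 h1
  show 0 < sSup _
  omega


lemma Algebra.norm_algebraMap_pow (K F L : Type*) [Field K] [Field F] [Field L]
    [Algebra K F] [Algebra F L] [Algebra K L] [IsScalarTower K F L]
    [FiniteDimensional K F] [FiniteDimensional F L] (y : F) :
    Algebra.norm K (algebraMap F L y) = (Algebra.norm K y) ^ Module.finrank F L := by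
  let bF := Module.finBasis K F
  let bL := Module.finBasis F L
  rw [Algebra.norm_eq_matrix_det (bF.smulTower bL),
    Algebra.smulTower_leftMulMatrix_algebraMap, Matrix.det_blockDiagonal,
    ← Algebra.norm_eq_matrix_det bF]
  simp only [Finset.prod_const, Finset.card_univ, Fintype.card_fin]

open IntermediateField in
lemma Algebra.norm_eq_pow_coeff_zero_minpoly {K L : Type*} [Field K] [Field L] [Algebra K L]
    [FiniteDimensional K L] (x : L) :
    ∃ e m : ℕ, 0 < m ∧ Algebra.norm K x = ((-1) ^ e * (minpoly K x).coeff 0) ^ m := by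
  have hx : IsIntegral K x := Algebra.IsIntegral.isIntegral x
  haveI : FiniteDimensional K⟮x⟯ L := FiniteDimensional.right K K⟮x⟯ L
  let pbx := IntermediateField.adjoin.powerBasis hx
  refine ⟨pbx.dim, Module.finrank K⟮x⟯ L, Module.finrank_pos, ?_⟩
  have h1 : Algebra.norm K (AdjoinSimple.gen K x) =
      (-1) ^ pbx.dim * ((minpoly K x).coeff 0) := by
    have := PowerBasis.norm_gen_eq_coeff_zero_minpoly pbx
    rwa [IntermediateField.adjoin.powerBasis_gen, minpoly_gen K x] at this
  rw [← h1, ← Algebra.norm_algebraMap_pow K K⟮x⟯ L (AdjoinSimple.gen K x),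
    AdjoinSimple.algebraMap_gen K x]

theorem exists_good_element (R S : Type) [CommRing R] [IsDomain R] [IsNoetherianRing R]
    [IsIntegrallyClosed R]
    [CommRing S] [IsDomain S] [IsNoetherianRing S] [IsIntegrallyClosed S]
    [UniqueFactorizationMonoid S] [Algebra R S] [Module.Finite R S]
    (hinj : Function.Injective (algebraMap R S))
    (P : Ideal R) (hP : HeightOnePrime R P) :
    ∃ a : R, a ≠ 0 ∧ a ∈ P ∧ ∀ P' : Ideal R, HeightOnePrime R P' → P' ≠ P → a ∉ P' := by
  haveI : Algebra.IsIntegral R S := Algebra.IsIntegral.of_finite R S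
  haveI hPp : P.IsPrime := hP.1
  obtain ⟨r, hrP, hr0⟩ := (Submodule.ne_bot_iff P).mp hP.2.1
  obtain ⟨Q₀, -, hQ₀p, hQ₀c⟩ := Ideal.exists_ideal_over_prime_of_isIntegral P ⊥ (by
    intro x hx
    have hx0 : algebraMap R S x = 0 := by simpa [Ideal.mem_comap] using hx
    have : x = 0 := hinj (by simpa using hx0)
    simp [this])
  haveI := hQ₀p
  have hsQ : algebraMap R S r ∈ Q₀ := by
    rw [← hQ₀c] at hrP; exact hrP
  have hs0 : algebraMap R S r ≠ 0 := fun h => hr0 (hinj (by simpa using h))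
  obtain ⟨f, hfp, hfassoc⟩ := UniqueFactorizationMonoid.exists_prime_factors _ hs0
  obtain ⟨u, hu⟩ := hfassoc
  have hfQ : f.prod ∈ Q₀ := by
    have h1 : (f.prod * u * ((u⁻¹ : Sˣ) : S) : S) ∈ Q₀ :=
      Ideal.mul_mem_right _ _ (hu ▸ hsQ)
    simpa using h1
  obtain ⟨π, hπf, hπQ₀⟩ := (hQ₀p.multiset_prod_mem_iff_exists_mem f).mp hfQ
  have hπ : Prime π := hfp π hπf
  have hQp : (Ideal.span {π}).IsPrime := (Ideal.span_singleton_prime hπ.ne_zero).mpr hπ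
  have hQle : Ideal.span {π} ≤ Q₀ := (Ideal.span_singleton_le_iff_mem _).mpr hπQ₀
  have hπint : IsIntegral R π := Algebra.IsIntegral.isIntegral π
  have hQc : (Ideal.span {π}).comap (algebraMap R S) = P := by
    have h1 : (Ideal.span {π}).comap (algebraMap R S) ≤ P := hQ₀c ▸ Ideal.comap_mono hQle
    have h2 : (Ideal.span {π}).comap (algebraMap R S) ≠ ⊥ :=
      Ideal.comap_ne_bot_of_integral_mem hπ.ne_zero (Ideal.mem_span_singleton_self π) hπint
    rcases h1.lt_or_eq with hlt | heq
    · exact absurd (hP.2.2 _ (hQp.comap _) hlt) h2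
    · exact heq
  have hgmo : (minpoly R π).Monic := minpoly.monic hπint
  have hg : (Polynomial.aeval π) (minpoly R π) = 0 := minpoly.aeval R π
  set g := minpoly R π with hgdef
  set a := g.coeff 0 with hadef
  have haQ : algebraMap R S a ∈ Ideal.span {π} := by
    have h3 : (Polynomial.aeval π) (Polynomial.X * g.divX + Polynomial.C a) = 0 := by
      rw [Polynomial.X_mul_divX_add]; exact hg
    rw [map_add, map_mul, Polynomial.aeval_X, Polynomial.aeval_C] at h3
    rw [Ideal.mem_span_singleton]
    exact ⟨-(Polynomial.aeval π g.divX), by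
      have := eq_neg_of_add_eq_zero_right h3
      rw [this]; ring⟩
  have haP : a ∈ P := by rw [← hQc]; exact haQ
  have ha0 : a ≠ 0 := by
    intro h0
    have hk : g = Polynomial.X * g.divX := by
      conv_lhs => rw [← Polynomial.X_mul_divX_add g]
      rw [← hadef, h0, map_zero, add_zero]
    have hπk : (Polynomial.aeval π) g.divX = 0 := by
      have h4 := hg
      rw [hk, map_mul, Polynomial.aeval_X] at h4
      rcases mul_eq_zero.mp h4 with h | h
      · exact absurd h hπ.ne_zero
      · exact h
    have hkmo : g.divX.Monic := Polynomial.monic_X.of_mul_monic_left (hk ▸ hgmo)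
    have hdeg := minpoly.min R π hkmo hπk
    exact absurd hdeg (not_le.mpr (Polynomial.degree_divX_lt (minpoly.ne_zero hπint)))
  refine ⟨a, ha0, haP, ?_⟩
  -- the hard part
  intro P' hP' hne haP'
  haveI hP'p : P'.IsPrime := hP'.1
  have hPnle : ¬ P ≤ P' := by
    intro hle
    rcases hle.lt_or_eq with hlt | heq
    · exact hP.2.1 (hP'.2.2 P hPp hlt)
    · exact hne heq.symm
  obtain ⟨r'', hr''P, hr''P'⟩ := SetLike.not_le_iff_exists.mp hPnle
  have hM' : Algebra.algebraMapSubmonoid S P'.primeCompl ≤ S⁰ :=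
    map_le_nonZeroDivisors_of_injective _ hinj P'.primeCompl_le_nonZeroDivisors
  haveI : IsDomain (Localization (Algebra.algebraMapSubmonoid S P'.primeCompl)) :=
    IsLocalization.isDomain_localization hM'
  haveI : IsDomain (Localization.AtPrime P') :=
    IsLocalization.isDomain_localization P'.primeCompl_le_nonZeroDivisors
  haveI : IsNoetherianRing (Localization.AtPrime P') :=
    IsLocalization.isNoetherianRing P'.primeCompl _ inferInstance
  haveI : IsIntegrallyClosed (Localization.AtPrime P') :=
    isIntegrallyClosed_of_isLocalization (Localization.AtPrime P') P'.primeCompl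
      P'.primeCompl_le_nonZeroDivisors
  haveI : IsIntegrallyClosed (Localization (Algebra.algebraMapSubmonoid S P'.primeCompl)) :=
    isIntegrallyClosed_of_isLocalization
      (Localization (Algebra.algebraMapSubmonoid S P'.primeCompl)) _ hM'
  haveI : IsPrincipalIdealRing (Localization.AtPrime P') := by
    have htfae := tfae_of_isNoetherianRing_of_isLocalRing_of_isDomain
      (R := Localization.AtPrime P')
    have h30 := htfae.out 3 0
    refine h30.mp ⟨inferInstance, ?_⟩
    intro q hq hqp
    have hd := (IsLocalization.isPrime_iff_isPrime_disjoint P'.primeCompl _ q).mp hqp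
    have hcle : q.comap (algebraMap R (Localization.AtPrime P')) ≤ P' := by
      intro x hx
      by_contra hxP'
      exact Set.disjoint_left.mp hd.2 hxP' hx
    have hmapeq : q = Ideal.map (algebraMap R (Localization.AtPrime P'))
        (q.comap (algebraMap R (Localization.AtPrime P'))) :=
      (IsLocalization.map_comap P'.primeCompl _ q).symm
    rcases hcle.lt_or_eq with hlt | heq
    · exact absurd (by rw [hmapeq, hP'.2.2 (q.comap _) hd.1 hlt, Ideal.map_bot]) hq
    · rw [hmapeq, heq, Localization.AtPrime.map_eq_maximalIdeal]
  letI : Algebra (Localization.AtPrime P')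
      (Localization (Algebra.algebraMapSubmonoid S P'.primeCompl)) :=
    localizationAlgebra P'.primeCompl S
  haveI : IsScalarTower R (Localization.AtPrime P')
      (Localization (Algebra.algebraMapSubmonoid S P'.primeCompl)) :=
    IsScalarTower.of_algebraMap_eq (fun x =>
      (IsLocalization.map_eq (T := Algebra.algebraMapSubmonoid S P'.primeCompl)
        (Q := Localization (Algebra.algebraMapSubmonoid S P'.primeCompl))
        P'.primeCompl.le_comap_map x).symm)
  haveI : Algebra.IsIntegral (Localization.AtPrime P')
      (Localization (Algebra.algebraMapSubmonoid S P'.primeCompl)) :=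
    ⟨fun x => isIntegral_localization x⟩
  haveI : Module.Finite (Localization.AtPrime P')
      (Localization (Algebra.algebraMapSubmonoid S P'.primeCompl)) :=
    Module.Finite.of_isLocalization R S P'.primeCompl
  haveI : Module.IsTorsionFree R (FractionRing S) :=
    Module.isTorsionFree_iff_algebraMap_injective.mpr (by
      rw [IsScalarTower.algebraMap_eq R S (FractionRing S)]
      exact (IsFractionRing.injective S (FractionRing S)).comp hinj)
  letI : Algebra (FractionRing R) (FractionRing S) := FractionRing.liftAlgebra R _
  haveI : IsScalarTower R (FractionRing R) (FractionRing S) :=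
    FractionRing.isScalarTower_liftAlgebra R _
  letI : Algebra (Localization (Algebra.algebraMapSubmonoid S P'.primeCompl)) (FractionRing S) :=
    IsLocalization.localizationAlgebraOfSubmonoidLe _ _
      (Algebra.algebraMapSubmonoid S P'.primeCompl) S⁰ hM'
  haveI : IsScalarTower S (Localization (Algebra.algebraMapSubmonoid S P'.primeCompl))
      (FractionRing S) :=
    IsLocalization.localization_isScalarTower_of_submonoid_le _ _ _ _ hM'
  haveI : IsFractionRing (Localization (Algebra.algebraMapSubmonoid S P'.primeCompl))
      (FractionRing S) :=
    IsFractionRing.isFractionRing_of_isDomain_of_isLocalization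
      (Algebra.algebraMapSubmonoid S P'.primeCompl) _ _
  letI : Algebra (Localization.AtPrime P') (FractionRing S) :=
    ((algebraMap (FractionRing R) (FractionRing S)).comp
      (algebraMap (Localization.AtPrime P') (FractionRing R))).toAlgebra
  haveI : IsScalarTower (Localization.AtPrime P') (FractionRing R) (FractionRing S) :=
    IsScalarTower.of_algebraMap_eq' rfl
  haveI : IsScalarTower R (Localization.AtPrime P') (FractionRing S) :=
    IsScalarTower.of_algebraMap_eq (fun x => by
      rw [IsScalarTower.algebraMap_apply (Localization.AtPrime P') (FractionRing R)
          (FractionRing S),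
        ← IsScalarTower.algebraMap_apply R (Localization.AtPrime P') (FractionRing R),
        ← IsScalarTower.algebraMap_apply R (FractionRing R) (FractionRing S)])
  haveI : IsScalarTower (Localization.AtPrime P')
      (Localization (Algebra.algebraMapSubmonoid S P'.primeCompl)) (FractionRing S) :=
    IsScalarTower.of_algebraMap_eq' (by
      apply IsLocalization.ringHom_ext P'.primeCompl (S := Localization.AtPrime P')
      ext x
      rw [RingHom.comp_apply, RingHom.comp_apply, RingHom.comp_apply,
        ← IsScalarTower.algebraMap_apply R (Localization.AtPrime P') (FractionRing S),
        ← IsScalarTower.algebraMap_apply R (Localization.AtPrime P')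
          (Localization (Algebra.algebraMapSubmonoid S P'.primeCompl)),
        IsScalarTower.algebraMap_apply R S
          (Localization (Algebra.algebraMapSubmonoid S P'.primeCompl)),
        ← IsScalarTower.algebraMap_apply S
          (Localization (Algebra.algebraMapSubmonoid S P'.primeCompl)) (FractionRing S),
        IsScalarTower.algebraMap_apply R S (FractionRing S)])
  haveI : Module.IsTorsionFree (Localization.AtPrime P')
      (Localization (Algebra.algebraMapSubmonoid S P'.primeCompl)) :=
    Module.isTorsionFree_iff_algebraMap_injective.mpr (by
      have hinjAL : Function.Injective
          (algebraMap (Localization.AtPrime P') (FractionRing S)) := by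
        rw [IsScalarTower.algebraMap_eq (Localization.AtPrime P') (FractionRing R)
          (FractionRing S), RingHom.coe_comp]
        exact Function.Injective.comp
          (algebraMap (FractionRing R) (FractionRing S)).injective
          (IsFractionRing.injective (Localization.AtPrime P') (FractionRing R))
      rw [IsScalarTower.algebraMap_eq (Localization.AtPrime P')
        (Localization (Algebra.algebraMapSubmonoid S P'.primeCompl)) (FractionRing S),
        RingHom.coe_comp] at hinjAL
      exact Function.Injective.of_comp hinjAL)
  haveI : Module.Free (Localization.AtPrime P')
      (Localization (Algebra.algebraMapSubmonoid S P'.primeCompl)) :=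
    Module.free_of_finite_type_torsion_free'
  haveI : Algebra.IsAlgebraic (FractionRing R) (FractionRing S) :=
    isAlgebraic_of_isFractionRing (R := R) (S := S) _ _
  haveI : IsIntegrallyClosedIn (Localization (Algebra.algebraMapSubmonoid S P'.primeCompl))
      (FractionRing S) :=
    (isIntegrallyClosed_iff_isIntegrallyClosedIn _).mp inferInstance
  haveI : IsIntegralClosure (Localization (Algebra.algebraMapSubmonoid S P'.primeCompl))
      (Localization.AtPrime P') (FractionRing S) :=
    IsIntegralClosure.of_isIntegrallyClosedIn
  haveI : IsIntegrallyClosedIn S (FractionRing S) :=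
    (isIntegrallyClosed_iff_isIntegrallyClosedIn _).mp inferInstance
  haveI : IsIntegralClosure S R (FractionRing S) := IsIntegralClosure.of_isIntegrallyClosedIn
  haveI := IsIntegralClosure.isLocalization R (FractionRing R) (FractionRing S) S
  haveI : FiniteDimensional (FractionRing R) (FractionRing S) :=
    Module.Finite.of_isLocalization R S R⁰
  haveI := IsIntegralClosure.isLocalization (Localization.AtPrime P') (FractionRing R)
    (FractionRing S) (Localization (Algebra.algebraMapSubmonoid S P'.primeCompl))
  -- π becomes a unit in B
  have hmem'' : algebraMap R S r'' ∈ Algebra.algebraMapSubmonoid S P'.primeCompl :=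
    ⟨r'', hr''P', rfl⟩
  have hr''unit : IsUnit (algebraMap S
      (Localization (Algebra.algebraMapSubmonoid S P'.primeCompl)) (algebraMap R S r'')) :=
    IsLocalization.map_units _ ⟨_, hmem''⟩
  obtain ⟨t, ht⟩ := Ideal.mem_span_singleton.mp
    (show algebraMap R S r'' ∈ Ideal.span {π} by rw [← hQc] at hr''P; exact hr''P)
  have hπunit : IsUnit (algebraMap S
      (Localization (Algebra.algebraMapSubmonoid S P'.primeCompl)) π) := by
    rw [ht, map_mul] at hr''unit
    exact isUnit_of_mul_isUnit_left hr''unit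
  have hNunit : IsUnit (Algebra.norm (Localization.AtPrime P')
      (algebraMap S (Localization (Algebra.algebraMapSubmonoid S P'.primeCompl)) π)) :=
    hπunit.map _
  have hnorm := Algebra.norm_localization (Localization.AtPrime P')
    (nonZeroDivisors (Localization.AtPrime P')) (Rₘ := FractionRing R) (Sₘ := FractionRing S)
    (algebraMap S (Localization (Algebra.algebraMapSubmonoid S P'.primeCompl)) π)
  rw [← IsScalarTower.algebraMap_apply S
    (Localization (Algebra.algebraMapSubmonoid S P'.primeCompl)) (FractionRing S)] at hnorm
  obtain ⟨e, m, hm, hnm⟩ := Algebra.norm_eq_pow_coeff_zero_minpoly (K := FractionRing R)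
    (algebraMap S (FractionRing S) π)
  have hminp : minpoly (FractionRing R) (algebraMap S (FractionRing S) π)
      = g.map (algebraMap R (FractionRing R)) :=
    minpoly.isIntegrallyClosed_eq_field_fractions _ _ hπint
  rw [hminp, Polynomial.coeff_map, ← hadef] at hnm
  have hcomb : algebraMap (Localization.AtPrime P') (FractionRing R)
      (Algebra.norm (Localization.AtPrime P')
        (algebraMap S (Localization (Algebra.algebraMapSubmonoid S P'.primeCompl)) π))
      = ((-1) ^ e * algebraMap R (FractionRing R) a) ^ m := hnorm.symm.trans hnm
  rw [IsScalarTower.algebraMap_apply R (Localization.AtPrime P') (FractionRing R) a] at hcomb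
  have hNeq : Algebra.norm (Localization.AtPrime P')
      (algebraMap S (Localization (Algebra.algebraMapSubmonoid S P'.primeCompl)) π)
      = ((-1) ^ e * algebraMap R (Localization.AtPrime P') a) ^ m := by
    apply IsFractionRing.injective (Localization.AtPrime P') (FractionRing R)
    rw [hcomb, map_pow, map_mul, map_pow, map_neg, map_one]
  rw [hNeq] at hNunit
  have haunit : IsUnit (algebraMap R (Localization.AtPrime P') a) :=
    isUnit_of_mul_isUnit_right ((isUnit_pow_iff hm.ne').mp hNunit)
  have hmem : algebraMap R (Localization.AtPrime P') a ∈
      IsLocalRing.maximalIdeal (Localization.AtPrime P') :=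
    (IsLocalization.AtPrime.to_map_mem_maximal_iff _ P' a).mpr haP'
  exact (IsLocalRing.mem_maximalIdeal _).mp hmem haunit

/-- If `R` is a module-finite subring of a unique factorization domain `S` (both Noetherian
normal domains), then the divisor class group `Cl(R)` is torsion. -/
theorem divClassGroup_torsion_of_finite_in_UFD
    (R S : Type) [CommRing R] [IsDomain R] [IsNoetherianRing R] [IsIntegrallyClosed R]
    [CommRing S] [IsDomain S] [IsNoetherianRing S] [IsIntegrallyClosed S]
    [UniqueFactorizationMonoid S]
    [Algebra R S] [Module.Finite R S]
    (hinj : Function.Injective (algebraMap R S)) :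
    ∀ x : DivClassGroup R, ∃ n : ℕ, 0 < n ∧ n • x = 0 := by
  have key : ∀ Pp : {P : Ideal R // HeightOnePrime R P}, ∃ n : ℕ, 0 < n ∧
      (n • Finsupp.single Pp (1 : ℤ)) ∈ principalDivisors R := by
    intro Pp
    obtain ⟨a, ha0, haP, hnot⟩ := exists_good_element R S hinj Pp.1 Pp.2
    refine ⟨ordAt R Pp.1 Pp.2.1 a, one_le_ordAt R Pp.1 Pp.2.1 ha0 haP, ?_⟩
    apply AddSubgroup.subset_closure
    refine ⟨a, 1, ha0, one_ne_zero, ?_⟩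
    intro P'
    have hord1 : ordAt R P'.1 P'.2.1 1 = 0 :=
      ordAt_eq_zero_of_not_mem R P'.1 P'.2.1 ((Ideal.ne_top_iff_one P'.1).mp P'.2.1.ne_top)
    classical
    rw [hord1, Finsupp.smul_apply, Finsupp.single_apply]
    by_cases h : Pp = P'
    · subst h
      simp only [if_pos rfl, Nat.cast_zero, sub_zero, nsmul_eq_mul, mul_one, if_true]
    · have hnm : a ∉ P'.1 := hnot P'.1 P'.2 (fun hh => h (Subtype.ext hh.symm))
      rw [ordAt_eq_zero_of_not_mem R P'.1 P'.2.1 hnm]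
      simp [h]
  have hT : ∀ d : Divisor R, ∃ n : ℕ, 0 < n ∧ n • d ∈ principalDivisors R := by
    intro d
    induction d using Finsupp.induction with
    | zero => exact ⟨1, one_pos, by simpa using (principalDivisors R).zero_mem⟩
    | single_add P c d _ _ hd =>
      obtain ⟨n, hn, hmem⟩ := key P
      obtain ⟨m, hm, hmem'⟩ := hd
      refine ⟨n * m, Nat.mul_pos hn hm, ?_⟩
      rw [smul_add]
      refine AddSubgroup.add_mem _ ?_ ?_
      · have h2 : ((n * m) • Finsupp.single P c : Divisor R)
            = (m * c) • (n • Finsupp.single P (1 : ℤ)) := by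
          rw [Finsupp.smul_single, Finsupp.smul_single, Finsupp.smul_single]
          congr 1
          simp only [nsmul_eq_mul, smul_eq_mul]
          push_cast
          ring
        rw [h2]
        exact AddSubgroup.zsmul_mem _ hmem _
      · rw [mul_smul]
        exact AddSubgroup.nsmul_mem _ hmem' _
  have main : ∀ y : Divisor R ⧸ principalDivisors R, ∃ n : ℕ, 0 < n ∧ n • y = 0 := by
    intro y
    obtain ⟨d, rfl⟩ := QuotientAddGroup.mk'_surjective (principalDivisors R) y
    obtain ⟨n, hn, hmem⟩ := hT d
    refine ⟨n, hn, ?_⟩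
    rw [← map_nsmul]
    rwa [← QuotientAddGroup.eq_zero_iff] at hmem
  exact main
end

section
/- The ring map from R = ℂ[x_0,…,x_n]/(x_0^n − x_1⋯x_n) to the polynomial ring ℂ[a_0,…,a_{n−1}] sending x_0 ↦ a_0⋯a_{n−1} and x_i ↦ a_{i−1}^n for i = 1,…,n is a well-defined injective ring homomorphism, i.e., x_0^n − x_1⋯x_n lies in the kernel of the corresponding map from ℂ[x_0,…,x_n] and generates it. -/
open MvPolynomial


private lemma constFinsupp_apply {n : ℕ} (j : ℕ) (i : Fin n) :
    (Finsupp.equivFunOnFinite.symm (fun _ => j) : Fin n →₀ ℕ) i = j := rfl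

private lemma expand_monomial_smul {σ : Type*} {p : ℕ} (hp : p ≠ 0) (d : σ →₀ ℕ) (c : ℂ) :
    expand p (monomial d c) = monomial (p • d) c := by
  rw [expand_monomial, monomial_eq]

private lemma prodX_pow (n j : ℕ) :
    (∏ i : Fin n, (X i : MvPolynomial (Fin n) ℂ)) ^ j
      = monomial (Finsupp.equivFunOnFinite.symm fun _ => j) 1 := by
  rcases Nat.eq_zero_or_pos j with hj | hj
  · subst hj
    have : (Finsupp.equivFunOnFinite.symm fun _ => (0:ℕ) : Fin n →₀ ℕ) = 0 := by
      ext i; simp [constFinsupp_apply]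
    simp [this]
  · rw [← prod_X_pow_eq_monomial]
    have hsupp : (Finsupp.equivFunOnFinite.symm fun _ => j : Fin n →₀ ℕ).support
        = Finset.univ := by
      ext i
      simp only [Finsupp.mem_support_iff, constFinsupp_apply, Finset.mem_univ, iff_true]
      omega
    rw [hsupp, ← Finset.prod_pow]
    exact Finset.prod_congr rfl fun i _ => by rw [constFinsupp_apply]

private lemma nat_cancel {n a b j k : ℕ} (hj : j < n) (hk : k < n)
    (h : n * a + j = n * b + k) : j = k := by
  have h1 : (n * a + j) % n = (n * b + k) % n := by rw [h]
  rw [Nat.mul_add_mod, Nat.mul_add_mod, Nat.mod_eq_of_lt hj, Nat.mod_eq_of_lt hk] at h1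
  exact h1

private lemma coeff_term {n : ℕ} (hn : 2 ≤ n) (q : MvPolynomial (Fin n) ℂ) {j k : ℕ}
    (hj : j < n) (hk : k < n) (m : Fin n →₀ ℕ) :
    coeff (n • m + Finsupp.equivFunOnFinite.symm fun _ => k)
        (expand n q * (∏ i : Fin n, X i) ^ j)
      = if j = k then coeff m q else 0 := by
  have hn0 : n ≠ 0 := by omega
  have i0 : Fin n := ⟨0, by omega⟩
  induction q using MvPolynomial.induction_on' with
  | monomial m' c =>
    rw [expand_monomial_smul hn0, prodX_pow, monomial_mul, mul_one, coeff_monomial,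
      coeff_monomial]
    by_cases hjk : j = k
    · subst hjk
      rw [if_pos rfl]
      apply if_congr ?_ rfl rfl
      constructor
      · intro h
        have h2 : n • m' = n • m := by
          have := add_right_cancel h
          exact this
        ext i
        have := DFunLike.congr_fun h2 i
        simp only [Finsupp.smul_apply, smul_eq_mul] at this
        exact Nat.eq_of_mul_eq_mul_left (by omega) this
      · intro h; rw [h]
    · rw [if_neg hjk, if_neg]
      intro h
      apply hjk
      have := DFunLike.congr_fun h i0
      simp only [Finsupp.add_apply, Finsupp.smul_apply, smul_eq_mul,
        constFinsupp_apply] at this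
      exact nat_cancel hj hk this
  | add p q hp hq =>
    rw [map_add, add_mul, coeff_add, hp, hq, coeff_add]
    split_ifs <;> simp

private lemma key {n : ℕ} (hn : 2 ≤ n) (r : Polynomial (MvPolynomial (Fin n) ℂ))
    (hdeg : r.degree < (n : ℕ))
    (h : Polynomial.eval₂
        ((expand n : MvPolynomial (Fin n) ℂ →ₐ[ℂ] MvPolynomial (Fin n) ℂ) :
          MvPolynomial (Fin n) ℂ →+* MvPolynomial (Fin n) ℂ)
        (∏ i : Fin n, X i) r = 0) : r = 0 := by
  apply Polynomial.ext
  intro k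
  rw [Polynomial.coeff_zero]
  by_cases hk : k < n
  · apply MvPolynomial.ext
    intro m
    rw [coeff_zero]
    have h2 := congrArg
      (MvPolynomial.coeff (n • m + Finsupp.equivFunOnFinite.symm fun _ => k)) h
    rw [Polynomial.eval₂_eq_sum, Polynomial.sum_def, MvPolynomial.coeff_sum,
      MvPolynomial.coeff_zero] at h2
    simp only [RingHom.coe_coe] at h2
    have h3 : ∀ j ∈ r.support,
        coeff (n • m + Finsupp.equivFunOnFinite.symm fun _ => k)
          ((expand n : MvPolynomial (Fin n) ℂ →ₐ[ℂ] MvPolynomial (Fin n) ℂ)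
              (r.coeff j) * (∏ i : Fin n, X i) ^ j)
          = if j = k then coeff m (r.coeff j) else 0 := by
      intro j hjs
      have hj : j < n := by
        have := Polynomial.le_degree_of_ne_zero (Polynomial.mem_support_iff.mp hjs)
        have := lt_of_le_of_lt this hdeg
        exact_mod_cast this
      exact coeff_term hn _ hj hk m
    rw [Finset.sum_congr rfl h3, Finset.sum_ite_eq' r.support k
      (fun j => coeff m (r.coeff j))] at h2
    by_cases hks : k ∈ r.support
    · rw [if_pos hks] at h2; exact h2
    · rw [Polynomial.notMem_support_iff.mp hks, coeff_zero]
  · exact Polynomial.coeff_eq_zero_of_degree_lt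
      (lt_of_lt_of_le hdeg (by exact_mod_cast Nat.le_of_not_lt hk))

/-- The ring map `ℂ[x₀,…,xₙ] → ℂ[a₀,…,a_{n−1}]` sending `x₀ ↦ a₀⋯a_{n−1}` and
`xᵢ ↦ a_{i−1}ⁿ` for `i = 1,…,n` kills `x₀ⁿ − x₁⋯xₙ`, and its kernel is exactly the
principal ideal `(x₀ⁿ − x₁⋯xₙ)`; hence the induced map
`ℂ[x₀,…,xₙ]/(x₀ⁿ − x₁⋯xₙ) → ℂ[a₀,…,a_{n−1}]` is a well-defined injective ring map. -/
theorem kernel_of_toric_parametrization (n : ℕ) (hn : 2 ≤ n) :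
    let φ : MvPolynomial (Fin (n + 1)) ℂ →ₐ[ℂ] MvPolynomial (Fin n) ℂ :=
      aeval (Fin.cases (∏ i : Fin n, X i) (fun i : Fin n => (X i) ^ n))
    φ ((X 0) ^ n - ∏ i : Fin n, X i.succ) = 0 ∧
      RingHom.ker (φ : MvPolynomial (Fin (n + 1)) ℂ →+* MvPolynomial (Fin n) ℂ) =
        Ideal.span {(X 0) ^ n - ∏ i : Fin n, X i.succ} := by
  intro φ
  have hn0 : n ≠ 0 := by omega
  set P : MvPolynomial (Fin n) ℂ := ∏ i : Fin n, X i with hP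
  set f : MvPolynomial (Fin (n + 1)) ℂ := (X 0) ^ n - ∏ i : Fin n, X i.succ with hf
  -- the composition identity
  have hcompHom : (φ : MvPolynomial (Fin (n + 1)) ℂ →+* MvPolynomial (Fin n) ℂ)
      = (Polynomial.eval₂RingHom
          ((expand n : MvPolynomial (Fin n) ℂ →ₐ[ℂ] MvPolynomial (Fin n) ℂ) :
            MvPolynomial (Fin n) ℂ →+* MvPolynomial (Fin n) ℂ) P).comp
        ((finSuccEquiv ℂ n :
            MvPolynomial (Fin (n + 1)) ℂ ≃ₐ[ℂ] Polynomial (MvPolynomial (Fin n) ℂ)) :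
          MvPolynomial (Fin (n + 1)) ℂ →+* Polynomial (MvPolynomial (Fin n) ℂ)) := by
    apply MvPolynomial.ringHom_ext
    · intro c
      have h1 : finSuccEquiv ℂ n (C c) = Polynomial.C (C c) := by
        simp [finSuccEquiv_apply]
      simp [φ, h1, expand_C]
    · intro i
      refine Fin.cases ?_ (fun i => ?_) i
      · have h1 : finSuccEquiv ℂ n (X 0) = Polynomial.X := finSuccEquiv_X_zero
        simp [φ, h1, hP]
      · have h1 : finSuccEquiv ℂ n (X i.succ) = Polynomial.C (X i) := finSuccEquiv_X_succ
        simp [φ, h1]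
  have hcomp : ∀ p : MvPolynomial (Fin (n + 1)) ℂ,
      φ p = Polynomial.eval₂
        ((expand n : MvPolynomial (Fin n) ℂ →ₐ[ℂ] MvPolynomial (Fin n) ℂ) :
          MvPolynomial (Fin n) ℂ →+* MvPolynomial (Fin n) ℂ) P (finSuccEquiv ℂ n p) :=
    fun p => RingHom.congr_fun hcompHom p
  have hφf : φ f = 0 := by
    simp only [hf, map_sub, map_pow, map_prod, φ, aeval_X, Fin.cases_zero, Fin.cases_succ]
    rw [Finset.prod_pow, sub_self]
  refine ⟨hφf, ?_⟩
  have hef : finSuccEquiv ℂ n f = Polynomial.X ^ n - Polynomial.C P := by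
    have h2 : finSuccEquiv ℂ n (∏ i : Fin n, X i.succ) = Polynomial.C P := by
      rw [map_prod]
      simp only [finSuccEquiv_X_succ]
      rw [← map_prod]
    rw [hf, map_sub, map_pow, finSuccEquiv_X_zero, h2]
  have hmonic : (Polynomial.X ^ n - Polynomial.C P).Monic :=
    Polynomial.monic_X_pow_sub_C P hn0
  apply le_antisymm
  · intro p hp
    rw [RingHom.mem_ker] at hp
    replace hp : φ p = 0 := hp
    rw [hcomp p] at hp
    -- division
    set q := finSuccEquiv ℂ n p with hq
    have hdiv : (Polynomial.X ^ n - Polynomial.C P) * (q /ₘ (Polynomial.X ^ n - Polynomial.C P))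
        + q %ₘ (Polynomial.X ^ n - Polynomial.C P) = q := by
      rw [add_comm]
      exact Polynomial.modByMonic_add_div q _
    have hevalf : Polynomial.eval₂
        ((expand n : MvPolynomial (Fin n) ℂ →ₐ[ℂ] MvPolynomial (Fin n) ℂ) :
          MvPolynomial (Fin n) ℂ →+* MvPolynomial (Fin n) ℂ) P
        (Polynomial.X ^ n - Polynomial.C P) = 0 := by
      rw [← hef, ← hcomp]
      exact hφf
    have hr : Polynomial.eval₂
        ((expand n : MvPolynomial (Fin n) ℂ →ₐ[ℂ] MvPolynomial (Fin n) ℂ) :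
          MvPolynomial (Fin n) ℂ →+* MvPolynomial (Fin n) ℂ) P
        (q %ₘ (Polynomial.X ^ n - Polynomial.C P)) = 0 := by
      have := congrArg (Polynomial.eval₂
        ((expand n : MvPolynomial (Fin n) ℂ →ₐ[ℂ] MvPolynomial (Fin n) ℂ) :
          MvPolynomial (Fin n) ℂ →+* MvPolynomial (Fin n) ℂ) P) hdiv
      rw [Polynomial.eval₂_add, Polynomial.eval₂_mul, hevalf, zero_mul, zero_add, hp] at this
      exact this
    have hdeg : (q %ₘ (Polynomial.X ^ n - Polynomial.C P)).degree < (n : ℕ) := by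
      have := Polynomial.degree_modByMonic_lt q hmonic
      rwa [Polynomial.degree_X_pow_sub_C (by omega) P] at this
    have hr0 : q %ₘ (Polynomial.X ^ n - Polynomial.C P) = 0 := key hn _ hdeg hr
    have hdvd : finSuccEquiv ℂ n f ∣ q := by
      rw [hef]
      exact (Polynomial.modByMonic_eq_zero_iff_dvd hmonic).mp hr0
    obtain ⟨c, hc⟩ := hdvd
    rw [Ideal.mem_span_singleton]
    refine ⟨(finSuccEquiv ℂ n).symm c, ?_⟩
    have : p = (finSuccEquiv ℂ n).symm q := by rw [hq, AlgEquiv.symm_apply_apply]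
    rw [this, hc, map_mul, AlgEquiv.symm_apply_apply]
  · rw [Ideal.span_le, Set.singleton_subset_iff]
    exact hφf
end

section
/- Let R → S be an inclusion of k-algebras with an R-linear splitting σ : S → R (σ(1) = 1). For any k-linear differential operator δ of order ≤ m on S, the composite s ↦ σ(δ(s)) restricted to R is a k-linear differential operator of order ≤ m on R. -/
/-- `IsDiffOp k A m δ` : the `k`-linear endomorphism `δ` of `A` is a `k`-linear differential
operator of order `≤ m`, defined inductively: operators of order `≤ 0` are multiplications by
ring elements, and `δ` has order `≤ m+1` if `[δ, r] = δ∘(r·) − (r·)∘δ` has order `≤ m` for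
every `r ∈ A`. -/
def IsDiffOp (k : Type*) (A : Type*) [CommSemiring k] [CommRing A] [Algebra k A] :
    ℕ → (A →ₗ[k] A) → Prop
  | 0, δ => ∃ a : A, ∀ x : A, δ x = a * x
  | m + 1, δ => ∀ r : A,
      IsDiffOp k A m (δ ∘ₗ LinearMap.mulLeft k r - LinearMap.mulLeft k r ∘ₗ δ)

section Splitting

variable {k R S : Type*} [CommSemiring k] [CommRing R] [CommRing S] [Algebra k R] [Algebra k S]
  {φ : R →ₐ[k] S} {σ : S →ₗ[k] R}

theorem splitting_comp_mulLeft_comp (hσ : ∀ (r : R) (s : S), σ (φ r * s) = r * σ s) (a : S) :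
    σ ∘ₗ LinearMap.mulLeft k a ∘ₗ φ.toLinearMap = LinearMap.mulLeft k (σ a) := by
  ext x
  rw [LinearMap.comp_apply, LinearMap.comp_apply, AlgHom.toLinearMap_apply,
    LinearMap.mulLeft_apply, LinearMap.mulLeft_apply, mul_comm a, hσ, mul_comm]

theorem splitting_comp_commutator (hσ : ∀ (r : R) (s : S), σ (φ r * s) = r * σ s)
    (δ : S →ₗ[k] S) (r : R) :
    (σ ∘ₗ δ ∘ₗ φ.toLinearMap) ∘ₗ LinearMap.mulLeft k r -
        LinearMap.mulLeft k r ∘ₗ (σ ∘ₗ δ ∘ₗ φ.toLinearMap) =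
      σ ∘ₗ (δ ∘ₗ LinearMap.mulLeft k (φ r) - LinearMap.mulLeft k (φ r) ∘ₗ δ) ∘ₗ
        φ.toLinearMap := by
  ext x
  simp only [LinearMap.sub_apply, LinearMap.comp_apply, AlgHom.toLinearMap_apply,
    LinearMap.mulLeft_apply, map_sub, map_mul, hσ]

end Splitting

theorem diffOp_of_splitting_general
    (k R S : Type*) [CommSemiring k] [CommRing R] [CommRing S]
    [Algebra k R] [Algebra k S]
    (φ : R →ₐ[k] S)
    (σ : S →ₗ[k] R) (hσlin : ∀ (r : R) (s : S), σ (φ r * s) = r * σ s)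
    (m : ℕ) (δ : S →ₗ[k] S) (hδ : IsDiffOp k S m δ) :
    IsDiffOp k R m (σ ∘ₗ δ ∘ₗ φ.toLinearMap) := by
  induction m generalizing δ with
  | zero =>
    obtain ⟨a, ha⟩ := hδ
    have hδa : δ = LinearMap.mulLeft k a := LinearMap.ext ha
    exact ⟨σ a, fun x => by rw [hδa, splitting_comp_mulLeft_comp hσlin, LinearMap.mulLeft_apply]⟩
  | succ m ih =>
    intro r
    rw [splitting_comp_commutator hσlin]
    exact ih _ (hδ (φ r))

/-- Let `R ⊆ S` be an inclusion of `k`-algebras with an `R`-linear splitting `σ : S → R`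
(`σ 1 = 1`). For any `k`-linear differential operator `δ` of order `≤ m` on `S`, the
composite `r ↦ σ(δ(r))` (i.e. `σ ∘ δ` restricted to `R`) is a `k`-linear differential
operator of order `≤ m` on `R`. -/
theorem diffOp_of_splitting
    (k R S : Type*) [CommSemiring k] [CommRing R] [CommRing S]
    [Algebra k R] [Algebra k S]
    (φ : R →ₐ[k] S) (hφ : Function.Injective φ)
    (σ : S →ₗ[k] R) (hσlin : ∀ (r : R) (s : S), σ (φ r * s) = r * σ s) (hσ1 : σ 1 = 1)
    (m : ℕ) (δ : S →ₗ[k] S) (hδ : IsDiffOp k S m δ) :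
    IsDiffOp k R m (σ ∘ₗ δ ∘ₗ φ.toLinearMap) :=
  diffOp_of_splitting_general k R S φ σ hσlin m δ hδ
end
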